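/- (Theorem 3, quantile part.) Under Assumptions 1, 2, 6, 7, and 8, for every q ∈ (0,1), F_{CIC,1}^{-1}(q) − F_{CIC,0}^{-1}(q) = τ_q, i.e. the local quantile treatment effect of order q for treatment-group switchers is identified by the CIC distributions. -/

import Mathlib

open MeasureTheory ProbabilityTheory Set

namespace FuzzyDID

variable {Ω : Type*}

/-- Expectation of `R` conditional on the event `A`. -/
noncomputable def cexp [MeasurableSpace Ω] (μ : Measure Ω) (A : Set Ω) (R : Ω → ℝ) : ℝ :=
  ∫ ω, R ω ∂(μ[|A])

/-- The cell `{G = g, T = t}`. -/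
def cell (G T : Ω → ℝ) (g t : ℝ) : Set Ω := {ω | G ω = g ∧ T ω = t}

/-- The cell `{D = d, G = g, T = t}`. -/
def dcell (D G T : Ω → ℝ) (d g t : ℝ) : Set Ω := {ω | D ω = d ∧ G ω = g ∧ T ω = t}

/-- Potential treatment status at time `t` : `D(t) = 1{V ≥ v_{G t}}`. -/
noncomputable def Dpot (V G : Ω → ℝ) (v : ℝ → ℝ → ℝ) (t : ℝ) (ω : Ω) : ℝ :=
  if v (G ω) t ≤ V ω then 1 else 0

/-- The cdf of `R` conditional on the event `A`. -/
noncomputable def ccdf [MeasurableSpace Ω] (μ : Measure Ω) (A : Set Ω) (R : Ω → ℝ)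
    (y : ℝ) : ℝ :=
  ((μ[|A]) {ω | R ω ≤ y}).toReal

/-- Generalized inverse (quantile) `F⁻¹(q) = inf {x : F x ≥ q}`. -/
noncomputable def quantile (F : ℝ → ℝ) (q : ℝ) : ℝ := sInf {x | q ≤ F x}

/-- The (topological) support of a measure on ℝ. -/
def msupport (ν : Measure ℝ) : Set ℝ := {x | ∀ ε > 0, 0 < ν (Metric.ball x ε)}

end FuzzyDID

open FuzzyDID

open Filter Topology

section Aux

variable {Ω : Type*} [MeasurableSpace Ω]

lemma aux_msupport_compl_null (ν : Measure ℝ) : ν (msupport ν)ᶜ = 0 := by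
  apply measure_null_of_locally_null
  intro x hx
  simp only [msupport, mem_compl_iff, mem_setOf_eq, not_forall] at hx
  obtain ⟨ε, hε, h⟩ := hx
  refine ⟨Metric.ball x ε, nhdsWithin_le_nhds (Metric.ball_mem_nhds x hε), ?_⟩
  simpa using h

lemma aux_msupport_zero : msupport (0 : Measure ℝ) = ∅ := by
  ext x
  simp only [msupport, mem_setOf_eq, mem_empty_iff_false, iff_false, not_forall]
  exact ⟨1, by norm_num⟩

lemma aux_msupport_nonempty (ν : Measure ℝ) (hν : ν ≠ 0) : (msupport ν).Nonempty := by
  by_contra h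
  rw [not_nonempty_iff_eq_empty] at h
  have h2 := aux_msupport_compl_null ν
  rw [h, compl_empty] at h2
  exact hν (Measure.measure_univ_eq_zero.mp h2)

lemma aux_pos_of_msupport {μ : Measure Ω} {A : Set Ω} {R : Ω → ℝ} {S : Set ℝ}
    (hS : S.Nonempty) (h : msupport (Measure.map R (μ[|A])) = S) : μ A ≠ 0 := by
  intro h0
  rw [cond_eq_zero_of_meas_eq_zero h0, Measure.map_zero, aux_msupport_zero] at h
  exact hS.ne_empty h.symm

lemma aux_null_outside {μ : Measure Ω} {A : Set Ω} {R : Ω → ℝ} (hR : Measurable R) {S : Set ℝ}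
    (hSm : MeasurableSet S) (h : msupport (Measure.map R (μ[|A])) = S) :
    (μ[|A]) {ω | R ω ∉ S} = 0 := by
  have h2 := aux_msupport_compl_null (Measure.map R (μ[|A]))
  rw [h, Measure.map_apply hR hSm.compl] at h2
  exact h2

lemma aux_null_singleton {ρ : Measure Ω} [IsFiniteMeasure ρ] {R : Ω → ℝ} (hR : Measurable R)
    (h : Continuous (fun y => (ρ {ω | R ω ≤ y}).toReal)) (z : ℝ) : ρ {ω | R ω = z} = 0 := by
  have hmono : Monotone (fun n : ℕ => {ω | R ω ≤ z - 1 / (n + 1)}) := by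
    intro m n hmn ω hω
    simp only [mem_setOf_eq] at hω ⊢
    have hmn' : (m : ℝ) + 1 ≤ (n : ℝ) + 1 := by exact_mod_cast Nat.succ_le_succ hmn
    have : (1 : ℝ) / (n + 1) ≤ 1 / (m + 1) := one_div_le_one_div_of_le (by positivity) hmn'
    linarith
  have hunion : (⋃ n : ℕ, {ω | R ω ≤ z - 1 / (n + 1)}) = {ω | R ω < z} := by
    ext ω
    simp only [mem_iUnion, mem_setOf_eq]
    constructor
    · rintro ⟨n, hn⟩
      have : (0 : ℝ) < 1 / (n + 1) := by positivity
      linarith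
    · intro hω
      obtain ⟨n, hn⟩ := exists_nat_one_div_lt (show (0:ℝ) < z - R ω by linarith)
      refine ⟨n, ?_⟩
      linarith
  have h1 : Tendsto (fun n : ℕ => ρ {ω | R ω ≤ z - 1 / (n + 1)}) atTop
      (𝓝 (ρ {ω | R ω < z})) := by
    have := tendsto_measure_iUnion_atTop (μ := ρ) hmono
    rwa [hunion] at this
  have h2 : Tendsto (fun n : ℕ => (ρ {ω | R ω ≤ z - 1 / (n + 1)}).toReal) atTop
      (𝓝 ((ρ {ω | R ω ≤ z}).toReal)) := by
    have hz : Tendsto (fun n : ℕ => z - 1 / ((n : ℝ) + 1)) atTop (𝓝 z) := by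
      have := tendsto_one_div_add_atTop_nhds_zero_nat (𝕜 := ℝ)
      have := tendsto_const_nhds (x := z) (f := atTop (α := ℕ)) |>.sub this
      simpa using this
    exact (h.tendsto z).comp hz
  have h3 : Tendsto (fun n : ℕ => (ρ {ω | R ω ≤ z - 1 / (n + 1)}).toReal) atTop
      (𝓝 ((ρ {ω | R ω < z}).toReal)) :=
    (ENNReal.tendsto_toReal (measure_ne_top ρ _)).comp h1
  have heq : ρ {ω | R ω < z} = ρ {ω | R ω ≤ z} := by
    have := tendsto_nhds_unique h3 h2
    exact (ENNReal.toReal_eq_toReal_iff' (measure_ne_top ρ _) (measure_ne_top ρ _)).mp this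
  have hset : {ω | R ω = z} = {ω | R ω ≤ z} \ {ω | R ω < z} := by
    ext ω; simp only [mem_setOf_eq, mem_diff, not_lt]
    constructor
    · rintro rfl; exact ⟨le_refl _, le_refl _⟩
    · rintro ⟨h1', h2'⟩; exact le_antisymm h1' h2'
  have hm : MeasurableSet {ω | R ω < z} := hR measurableSet_Iio
  have hd := measure_diff (μ := ρ) (s₁ := {ω | R ω ≤ z}) (s₂ := {ω | R ω < z})
    (fun ω hω => (le_of_lt (hω : R ω < z) : R ω ≤ z)) hm.nullMeasurableSet (measure_ne_top ρ _)
  rw [hset, hd, heq, tsub_self]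

lemma aux_quantile_eq {Gf : ℝ → ℝ} {S : Set ℝ} (hord : S.OrdConnected)
    (hsm : StrictMonoOn Gf S) (hzero : ∀ x, (∀ s ∈ S, x < s) → Gf x = 0)
    {z : ℝ} (hz : z ∈ S) (hpos : 0 < Gf z) : quantile Gf (Gf z) = z := by
  have hls : IsLeast {x | Gf z ≤ Gf x} z := by
    constructor
    · show Gf z ≤ Gf z
      exact le_refl _
    · intro x hx
      by_contra hlt
      push_neg at hlt
      rcases em (x ∈ S) with hxS | hxS
      · exact absurd hx (not_le.mpr (hsm hxS hz hlt))
      · have hbelow : ∀ s ∈ S, x < s := by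
          intro s hs
          by_contra hsx
          push_neg at hsx
          exact hxS (hord.out hs hz ⟨hsx, hlt.le⟩)
        have h0 : Gf x = 0 := hzero x hbelow
        rw [mem_setOf_eq, h0] at hx
        exact absurd hpos (not_lt.mpr hx)
  exact hls.csInf_eq

lemma aux_mono_ordConnected_le {φ : ℝ → ℝ} (hφ : Monotone φ) (x : ℝ) :
    OrdConnected {u | φ u ≤ x} :=
  ⟨fun _ _ q hq z hz => le_trans (hφ hz.2) hq⟩

lemma aux_mono_ordConnected_mem {φ : ℝ → ℝ} (hφ : Monotone φ) {S : Set ℝ}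
    (hS : OrdConnected S) : OrdConnected {u | φ u ∈ S} :=
  ⟨fun p hp q hq z hz => hS.out hp hq ⟨hφ hz.1, hφ hz.2⟩⟩

end Aux

section Aux2

variable {Ω : Type*} [MeasurableSpace Ω]

lemma aux_cond_toReal {μ : Measure Ω} {A : Set Ω} (hA : MeasurableSet A)
    (X : Set Ω) : ((μ[|A]) X).toReal = (μ (A ∩ X)).toReal / (μ A).toReal := by
  rw [cond_apply hA, ENNReal.toReal_mul, ENNReal.toReal_inv, inv_mul_eq_div]

lemma aux_inter_cond {μ : Measure Ω} [IsFiniteMeasure μ] {A : Set Ω} (hA : MeasurableSet A)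
    (X : Set Ω) : μ (A ∩ X) = μ[|A] X * μ A := (cond_mul_eq_inter hA X μ).symm

lemma aux_cond_restrict_indep {μ : Measure Ω} [IsFiniteMeasure μ] {C : Set Ω}
    (hC : MeasurableSet C) {U T : Ω → ℝ} (hU : Measurable U) (hT : Measurable T)
    (hind : IndepFun U T (μ[|C])) {t : ℝ} (h0 : μ (C ∩ {ω | T ω = t}) ≠ 0)
    {B : Set ℝ} (hB : MeasurableSet B) :
    (μ[|C ∩ {ω | T ω = t}]) (U ⁻¹' B) = (μ[|C]) (U ⁻¹' B) := by
  have hTt : MeasurableSet {ω | T ω = t} := hT (measurableSet_singleton t)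
  have hμC : μ C ≠ 0 := fun h => h0 (measure_mono_null inter_subset_left h)
  haveI := cond_isProbabilityMeasure (μ := μ) hμC
  have hset : T ⁻¹' {t} = {ω | T ω = t} := rfl
  have hκt : (μ[|C]) {ω | T ω = t} ≠ 0 := by
    rw [cond_apply hC]
    exact mul_ne_zero (ENNReal.inv_ne_zero.mpr (measure_ne_top μ C)) h0
  have hκtop : (μ[|C]) {ω | T ω = t} ≠ ⊤ := measure_ne_top _ _
  have hprod : (μ[|C]) ({ω | T ω = t} ∩ U ⁻¹' B)
      = (μ[|C]) (U ⁻¹' B) * (μ[|C]) {ω | T ω = t} := by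
    have h2 := hind.measure_inter_preimage_eq_mul B {t} hB (measurableSet_singleton t)
    rw [hset] at h2
    rw [Set.inter_comm, h2]
  rw [← cond_cond_eq_cond_inter hC hTt, cond_apply hTt, hprod, mul_comm ((μ[|C]) (U ⁻¹' B)),
    ← mul_assoc, ENNReal.inv_mul_cancel hκt hκtop, one_mul]

lemma aux_indep_cell {μ : Measure Ω} [IsFiniteMeasure μ] {Gs : Set Ω} (hGm : MeasurableSet Gs)
    {V T : Ω → ℝ} (hV : Measurable V) (hT : Measurable T)
    (hind : IndepFun V T (μ[|Gs])) {B : Set ℝ} (hB : MeasurableSet B) (t : ℝ) :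
    μ (Gs ∩ V ⁻¹' B ∩ {ω | T ω = t}) = (μ[|Gs]) (V ⁻¹' B) * μ (Gs ∩ {ω | T ω = t}) := by
  have hset : T ⁻¹' {t} = {ω | T ω = t} := rfl
  have h1 : Gs ∩ V ⁻¹' B ∩ {ω | T ω = t} = Gs ∩ (V ⁻¹' B ∩ T ⁻¹' {t}) := by
    rw [Set.inter_assoc, hset]
  rw [h1, aux_inter_cond hGm,
    hind.measure_inter_preimage_eq_mul B {t} hB (measurableSet_singleton t),
    hset, aux_inter_cond hGm {ω | T ω = t}]
  ring

lemma aux_cond_congr {μ : Measure Ω} {A B : Set Ω} (hA : MeasurableSet A) (hB : MeasurableSet B)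
    (h : A =ᵐ[μ] B) : μ[|A] = μ[|B] := by
  have hAB : μ A = μ B := measure_congr h
  ext X hX
  rw [cond_apply hA, cond_apply hB, hAB, measure_congr (ae_eq_set_inter h (EventuallyEq.refl (ae μ) X))]

lemma aux_cexp_eq {μ : Measure Ω} (A : Set Ω) {D : Ω → ℝ}
    (hD : Measurable D) (hD01 : ∀ ω, D ω = 0 ∨ D ω = 1) :
    cexp μ A D = ((μ[|A]) {ω | D ω = 1}).toReal := by
  have hfun : (fun ω => D ω) = Set.indicator {ω | D ω = 1} (1 : Ω → ℝ) := by
    funext ω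
    rcases hD01 ω with h | h
    · rw [h, Set.indicator_of_notMem]
      simp only [mem_setOf_eq, h]
      norm_num
    · rw [h, Set.indicator_of_mem (by simpa [mem_setOf_eq] using h)]
      rfl
  unfold cexp
  rw [hfun]
  exact integral_indicator_one (hD (measurableSet_singleton 1))

end Aux2

section AuxKey

variable {Ω : Type*} [MeasurableSpace Ω]

set_option maxHeartbeats 1000000 in
lemma aux_key (μ : Measure Ω) [IsProbabilityMeasure μ]
    (U T : Ω → ℝ) (φ₀ φ₁ : ℝ → ℝ)
    (hU : Measurable U) (hT : Measurable T)
    (hφ₀ : StrictMono φ₀) (hφ₁ : StrictMono φ₁)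
    (C W : Set Ω) (hC : MeasurableSet C) (hW : MeasurableSet W)
    (SY : Set ℝ) (hord : SY.OrdConnected)
    (hCind : IndepFun U T (μ[|C])) (hWind : IndepFun U T (μ[|W]))
    (hCT0 : μ (C ∩ {ω | T ω = 0}) ≠ 0) (hCT1 : μ (C ∩ {ω | T ω = 1}) ≠ 0)
    (hWT0 : μ (W ∩ {ω | T ω = 0}) ≠ 0) (hWT1 : μ (W ∩ {ω | T ω = 1}) ≠ 0)
    (F Gf : ℝ → ℝ)
    (hF : ∀ x, F x = ((μ[|C ∩ {ω | T ω = 0}]) {ω | φ₀ (U ω) ≤ x}).toReal)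
    (hG : ∀ x, Gf x = ((μ[|C ∩ {ω | T ω = 1}]) {ω | φ₁ (U ω) ≤ x}).toReal)
    (hFsm : StrictMonoOn F SY) (hGsm : StrictMonoOn Gf SY)
    (hCsupp1 : (μ[|C ∩ {ω | T ω = 1}]) {ω | φ₁ (U ω) ∉ SY} = 0)
    (hWsupp0 : (μ[|W ∩ {ω | T ω = 0}]) {ω | φ₀ (U ω) ∉ SY} = 0)
    (hWatom : ∀ z : ℝ, (μ[|W ∩ {ω | T ω = 0}]) {ω | φ₀ (U ω) = z} = 0) (y : ℝ) :
    (μ[|W ∩ {ω | T ω = 0}]) {ω | quantile Gf (F (φ₀ (U ω))) ≤ y}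
      = (μ[|W ∩ {ω | T ω = 1}]) {ω | φ₁ (U ω) ≤ y} := by
  have hL1 : ∀ x : ℝ, MeasurableSet {u : ℝ | φ₁ u ≤ x} := fun x =>
    (aux_mono_ordConnected_le hφ₁.monotone x).measurableSet
  have hM1 : MeasurableSet {u : ℝ | φ₁ u ∈ SY} :=
    (aux_mono_ordConnected_mem hφ₁.monotone hord).measurableSet
  haveI iC0 : IsProbabilityMeasure (μ[|C ∩ {ω | T ω = 0}]) := cond_isProbabilityMeasure hCT0
  -- step 1 : pointwise identities for F and Gf
  have hFu : ∀ u : ℝ, F (φ₀ u) = ((μ[|C]) (U ⁻¹' Iic u)).toReal := by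
    intro u
    have hset : {ω | φ₀ (U ω) ≤ φ₀ u} = U ⁻¹' Iic u := by
      ext ω; simpa using hφ₀.le_iff_le
    rw [hF, hset, aux_cond_restrict_indep hC hU hT hCind hCT0 measurableSet_Iic]
  have hGu : ∀ u : ℝ, Gf (φ₁ u) = ((μ[|C]) (U ⁻¹' Iic u)).toReal := by
    intro u
    have hset : {ω | φ₁ (U ω) ≤ φ₁ u} = U ⁻¹' Iic u := by
      ext ω; simpa using hφ₁.le_iff_le
    rw [hG, hset, aux_cond_restrict_indep hC hU hT hCind hCT1 measurableSet_Iic]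
  have hFG : ∀ u : ℝ, F (φ₀ u) = Gf (φ₁ u) := fun u => by rw [hFu, hGu]
  -- Gf vanishes strictly below SY
  have hGzero : ∀ x, (∀ s ∈ SY, x < s) → Gf x = 0 := by
    intro x hx
    rw [hG]
    have hsub : {ω | φ₁ (U ω) ≤ x} ⊆ {ω | φ₁ (U ω) ∉ SY} := by
      intro ω hω hmem
      exact absurd hω (not_le.mpr (hx _ hmem))
    rw [measure_mono_null hsub hCsupp1]
    simp
  -- support of φ₁ ∘ U under μ[|C]
  have hκC1 : (μ[|C]) (U ⁻¹' {u | φ₁ u ∈ SY}ᶜ) = 0 := by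
    have h2 := aux_cond_restrict_indep hC hU hT hCind hCT1 hM1.compl
    rw [← h2]
    exact hCsupp1
  -- bounds for F
  have hF0 : ∀ x, 0 ≤ F x := fun x => by rw [hF]; exact ENNReal.toReal_nonneg
  have hF1 : ∀ x, F x ≤ 1 := fun x => by
    rw [hF]
    exact le_trans (ENNReal.toReal_mono ENNReal.one_ne_top prob_le_one) (by norm_num)
  -- the three bad sets
  set N1 : Set Ω := {ω | φ₀ (U ω) ∉ SY} with hN1def
  set N2 : Set Ω := {ω | φ₀ (U ω) ∈ SY ∧ F (φ₀ (U ω)) = 1} with hN2def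
  set N3 : Set Ω := {ω | φ₀ (U ω) ∈ SY ∧ F (φ₀ (U ω)) = 0} with hN3def
  set ρ0 := μ[|W ∩ {ω | T ω = 0}] with hρ0def
  have hN1 : ρ0 N1 = 0 := hWsupp0
  have hN2 : ρ0 N2 = 0 := by
    rcases em (∃ ω₀, ω₀ ∈ N2) with ⟨ω₀, h₀⟩ | hne
    · apply measure_mono_null _ (hWatom (φ₀ (U ω₀)))
      intro ω hω
      show φ₀ (U ω) = φ₀ (U ω₀)
      rcases lt_trichotomy (φ₀ (U ω)) (φ₀ (U ω₀)) with h | h | h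
      · have := hFsm hω.1 h₀.1 h
        rw [hω.2, h₀.2] at this
        exact absurd this (lt_irrefl 1)
      · exact h
      · have := hFsm h₀.1 hω.1 h
        rw [hω.2, h₀.2] at this
        exact absurd this (lt_irrefl 1)
    · have : N2 = ∅ := eq_empty_iff_forall_notMem.mpr fun ω hω => hne ⟨ω, hω⟩
      rw [this]; exact measure_empty
  have hN3 : ρ0 N3 = 0 := by
    rcases em (∃ ω₀, ω₀ ∈ N3) with ⟨ω₀, h₀⟩ | hne
    · apply measure_mono_null _ (hWatom (φ₀ (U ω₀)))
      intro ω hω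
      show φ₀ (U ω) = φ₀ (U ω₀)
      rcases lt_trichotomy (φ₀ (U ω)) (φ₀ (U ω₀)) with h | h | h
      · have := hFsm hω.1 h₀.1 h
        rw [hω.2, h₀.2] at this
        exact absurd this (lt_irrefl 0)
      · exact h
      · have := hFsm h₀.1 hω.1 h
        rw [hω.2, h₀.2] at this
        exact absurd this (lt_irrefl 0)
    · have : N3 = ∅ := eq_empty_iff_forall_notMem.mpr fun ω hω => hne ⟨ω, hω⟩
      rw [this]; exact measure_empty
  have hN : ρ0 (N1 ∪ (N2 ∪ N3)) = 0 :=
    measure_union_null hN1 (measure_union_null hN2 hN3)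
  -- pointwise identification on the good set
  have hgood : ∀ ω, ω ∉ N1 ∪ (N2 ∪ N3) → quantile Gf (F (φ₀ (U ω))) = φ₁ (U ω) := by
    intro ω hω
    have h0 : φ₀ (U ω) ∈ SY := by
      by_contra hc; exact hω (Or.inl hc)
    have hω2 : ¬(φ₀ (U ω) ∈ SY ∧ F (φ₀ (U ω)) = 1) := fun hc => hω (Or.inr (Or.inl hc))
    have hω3 : ¬(φ₀ (U ω) ∈ SY ∧ F (φ₀ (U ω)) = 0) := fun hc => hω (Or.inr (Or.inr hc))
    have h1 : φ₁ (U ω) ∈ SY := by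
      by_contra hc
      rcases em (∃ s ∈ SY, s ≤ φ₁ (U ω)) with ⟨s₀, hs₀, hle⟩ | hnone
      · -- all of SY is strictly below φ₁ (U ω)
        have habove : ∀ s ∈ SY, s < φ₁ (U ω) := by
          intro s hs
          rcases lt_or_ge s (φ₁ (U ω)) with h | h
          · exact h
          · exact absurd (hord.out hs₀ hs ⟨hle, h⟩) hc
        have hcompl : (U ⁻¹' Iic (U ω))ᶜ ⊆ U ⁻¹' {u | φ₁ u ∈ SY}ᶜ := by
          intro ω' hω'
          have hlt : φ₁ (U ω) < φ₁ (U ω') := hφ₁ (not_le.mp hω')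
          intro hmem
          exact absurd (habove _ hmem) (not_lt.mpr hlt.le)
        have hone : (μ[|C]) (U ⁻¹' Iic (U ω)) = 1 := by
          haveI : IsProbabilityMeasure (μ[|C]) :=
            cond_isProbabilityMeasure (fun h => hCT0 (measure_mono_null inter_subset_left h))
          rw [← prob_compl_eq_zero_iff (hU measurableSet_Iic)]
          exact measure_mono_null hcompl hκC1
        exact hω2 ⟨h0, by rw [hFu, hone]; simp⟩
      · push_neg at hnone
        have hzero : (μ[|C]) (U ⁻¹' Iic (U ω)) = 0 := by
          apply measure_mono_null _ hκC1
          intro ω' hω'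
          intro hmem
          have : φ₁ (U ω') ≤ φ₁ (U ω) := hφ₁.monotone (hω' : U ω' ≤ U ω)
          exact absurd (lt_of_le_of_lt this (hnone _ hmem)) (lt_irrefl _)
        exact hω3 ⟨h0, by rw [hFu, hzero]; simp⟩
    have hpos : 0 < F (φ₀ (U ω)) :=
      lt_of_le_of_ne (hF0 _) (Ne.symm fun h => hω3 ⟨h0, h⟩)
    rw [hFG]
    exact aux_quantile_eq hord hGsm hGzero h1 (by rw [← hFG]; exact hpos)
  -- conclude by a.e. equality and independence transfers
  have hae : {ω | quantile Gf (F (φ₀ (U ω))) ≤ y} =ᵐ[ρ0] {ω | φ₁ (U ω) ≤ y} := by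
    rw [ae_eq_set]
    constructor
    · apply measure_mono_null _ hN
      rintro ω ⟨hs, ht⟩
      simp only [mem_setOf_eq] at hs ht
      by_contra hc
      rw [hgood ω hc] at hs
      exact ht hs
    · apply measure_mono_null _ hN
      rintro ω ⟨hs, ht⟩
      simp only [mem_setOf_eq] at hs ht
      by_contra hc
      rw [← hgood ω hc] at hs
      exact ht hs
  have e0 : ρ0 {ω | quantile Gf (F (φ₀ (U ω))) ≤ y} = ρ0 {ω | φ₁ (U ω) ≤ y} :=
    measure_congr hae
  have t0 : ρ0 {ω | φ₁ (U ω) ≤ y} = (μ[|W]) (U ⁻¹' {u | φ₁ u ≤ y}) :=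
    aux_cond_restrict_indep hW hU hT hWind hWT0 (hL1 y)
  have t1 : (μ[|W ∩ {ω | T ω = 1}]) {ω | φ₁ (U ω) ≤ y}
      = (μ[|W]) (U ⁻¹' {u | φ₁ u ≤ y}) :=
    aux_cond_restrict_indep hW hU hT hWind hWT1 (hL1 y)
  rw [e0, t0, ← t1]

end AuxKey

section AuxMain

variable {Ω : Type*} [MeasurableSpace Ω]

lemma aux_cond_set_congr {μ : Measure Ω} {A : Set Ω} (X X' : Set Ω) (hA : MeasurableSet A)
    (h : A ∩ X = A ∩ X') : (μ[|A]) X = (μ[|A]) X' := by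
  rw [cond_apply hA, cond_apply hA, h]

set_option maxHeartbeats 1000000 in
lemma aux_main (μ : Measure Ω) [IsProbabilityMeasure μ]
    (Y D G T V Yd Ud : Ω → ℝ) (d : ℝ)
    (hYm : Measurable Y) (hTm : Measurable T)
    (hVm : Measurable V) (hUdm : Measurable Ud)
    (hG1m : MeasurableSet {ω | G ω = 1}) (hG0m : MeasurableSet {ω | G ω = 0})
    (φA φB : ℝ → ℝ) (hφA : StrictMono φA) (hφB : StrictMono φB)
    (hrep0 : ∀ ω, T ω = 0 → Yd ω = φA (Ud ω)) (hrep1 : ∀ ω, T ω = 1 → Yd ω = φB (Ud ω))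
    (hYd : ∀ ω, D ω = d → Y ω = Yd ω)
    (QW QC QC1 : Set ℝ) (hQWm : MeasurableSet QW) (hQCm : MeasurableSet QC)
    (hQC1m : MeasurableSet QC1)
    (hdc10 : dcell D G T d 1 0 = {ω | G ω = 1} ∩ V ⁻¹' QW ∩ {ω | T ω = 0})
    (hdc00 : dcell D G T d 0 0 = {ω | G ω = 0} ∩ V ⁻¹' QC ∩ {ω | T ω = 0})
    (hdc01 : dcell D G T d 0 1 = {ω | G ω = 0} ∩ V ⁻¹' QC1 ∩ {ω | T ω = 1})
    (hae01 : ({ω | G ω = 0} ∩ V ⁻¹' QC1 ∩ {ω | T ω = 1} : Set Ω)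
      =ᵐ[μ] ({ω | G ω = 0} ∩ V ⁻¹' QC ∩ {ω | T ω = 1} : Set Ω))
    (hUindC : IndepFun Ud T (μ[|{ω | G ω = 0} ∩ V ⁻¹' QC]))
    (hUindW : IndepFun Ud T (μ[|{ω | G ω = 1} ∩ V ⁻¹' QW]))
    (hVindG1 : IndepFun V T (μ[|{ω | G ω = 1}]))
    (SY : Set ℝ) (hord : SY.OrdConnected) (hSYm : MeasurableSet SY)
    (hpos10 : μ (dcell D G T d 1 0) ≠ 0) (hpos00 : μ (dcell D G T d 0 0) ≠ 0)
    (hpos01 : μ (dcell D G T d 0 1) ≠ 0)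
    (hposc11 : μ ({ω | G ω = 1} ∩ {ω | T ω = 1}) ≠ 0)
    (hsupp10 : msupport (Measure.map Y (μ[|dcell D G T d 1 0])) = SY)
    (hsupp01 : msupport (Measure.map Y (μ[|dcell D G T d 0 1])) = SY)
    (hcont10 : Continuous (ccdf μ (dcell D G T d 1 0) Y))
    (hsm00 : StrictMonoOn (ccdf μ (dcell D G T d 0 0) Y) SY)
    (hsm01 : StrictMonoOn (ccdf μ (dcell D G T d 0 1) Y) SY)
    (hP10 : ((μ[|cell G T 1 0]) {ω | D ω = d}) = (μ[|{ω | G ω = 1}]) (V ⁻¹' QW))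
    (y : ℝ) :
    ((μ[|cell G T 1 0]) {ω | D ω = d}).toReal
        * ccdf μ (dcell D G T d 1 0)
            (fun ω => quantile (ccdf μ (dcell D G T d 0 1) Y)
              (ccdf μ (dcell D G T d 0 0) Y (Y ω))) y
      = (μ ({ω | Yd ω ≤ y} ∩ ({ω | G ω = 1} ∩ V ⁻¹' QW ∩ {ω | T ω = 1}))).toReal
          / (μ ({ω | G ω = 1} ∩ {ω | T ω = 1})).toReal := by
  have hT0m : MeasurableSet {ω | T ω = 0} := hTm (measurableSet_singleton 0)
  have hT1m : MeasurableSet {ω | T ω = 1} := hTm (measurableSet_singleton 1)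
  have hCm : MeasurableSet ({ω | G ω = 0} ∩ V ⁻¹' QC) := hG0m.inter (hVm hQCm)
  have hC1m : MeasurableSet ({ω | G ω = 0} ∩ V ⁻¹' QC1) := hG0m.inter (hVm hQC1m)
  have hWm : MeasurableSet ({ω | G ω = 1} ∩ V ⁻¹' QW) := hG1m.inter (hVm hQWm)
  -- positivity facts
  have hCT0pos : μ (({ω | G ω = 0} ∩ V ⁻¹' QC) ∩ {ω | T ω = 0}) ≠ 0 := by
    rw [← hdc00]; exact hpos00
  have hμae : μ ({ω | G ω = 0} ∩ V ⁻¹' QC1 ∩ {ω | T ω = 1})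
      = μ ({ω | G ω = 0} ∩ V ⁻¹' QC ∩ {ω | T ω = 1}) := measure_congr hae01
  have hCT1pos : μ (({ω | G ω = 0} ∩ V ⁻¹' QC) ∩ {ω | T ω = 1}) ≠ 0 := by
    rw [← hμae, ← hdc01]; exact hpos01
  have hWT0pos : μ (({ω | G ω = 1} ∩ V ⁻¹' QW) ∩ {ω | T ω = 0}) ≠ 0 := by
    rw [← hdc10]; exact hpos10
  have hWsplit : ∀ t : ℝ, μ ({ω | G ω = 1} ∩ V ⁻¹' QW ∩ {ω | T ω = t})
      = (μ[|{ω | G ω = 1}]) (V ⁻¹' QW) * μ ({ω | G ω = 1} ∩ {ω | T ω = t}) :=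
    fun t => aux_indep_cell hG1m hVm hTm hVindG1 hQWm t
  have hkQW0 : (μ[|{ω | G ω = 1}]) (V ⁻¹' QW) ≠ 0 := by
    intro h
    apply hWT0pos
    rw [hWsplit 0, h, zero_mul]
  have hWT1pos : μ (({ω | G ω = 1} ∩ V ⁻¹' QW) ∩ {ω | T ω = 1}) ≠ 0 := by
    rw [hWsplit 1]
    exact mul_ne_zero hkQW0 hposc11
  -- membership implies representation facts
  have hmem00 : ∀ ω ∈ ({ω | G ω = 0} ∩ V ⁻¹' QC) ∩ {ω | T ω = 0}, Y ω = φA (Ud ω) := by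
    intro ω hω
    have hω' : ω ∈ dcell D G T d 0 0 := by
      rw [hdc00]; exact hω
    have hD : D ω = d := hω'.1
    rw [hYd ω hD, hrep0 ω hω.2]
  have hmem01 : ∀ ω ∈ ({ω | G ω = 0} ∩ V ⁻¹' QC1) ∩ {ω | T ω = 1}, Y ω = φB (Ud ω) := by
    intro ω hω
    have hω' : ω ∈ dcell D G T d 0 1 := by
      rw [hdc01]; exact hω
    have hD : D ω = d := hω'.1
    rw [hYd ω hD, hrep1 ω hω.2]
  have hmem10 : ∀ ω ∈ ({ω | G ω = 1} ∩ V ⁻¹' QW) ∩ {ω | T ω = 0}, Y ω = φA (Ud ω) := by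
    intro ω hω
    have hω' : ω ∈ dcell D G T d 1 0 := by
      rw [hdc10]; exact hω
    have hD : D ω = d := hω'.1
    rw [hYd ω hD, hrep0 ω hω.2]
  -- conditional measure identifications for the control cdfs
  have hF : ∀ x, ccdf μ (dcell D G T d 0 0) Y x
      = ((μ[|({ω | G ω = 0} ∩ V ⁻¹' QC) ∩ {ω | T ω = 0}]) {ω | φA (Ud ω) ≤ x}).toReal := by
    intro x
    show ((μ[|dcell D G T d 0 0]) {ω | Y ω ≤ x}).toReal = _
    rw [hdc00]
    congr 1
    apply aux_cond_set_congr _ _ (hCm.inter hT0m)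
    ext ω
    simp only [mem_inter_iff, mem_setOf_eq]
    constructor
    · rintro ⟨hω, hle⟩
      exact ⟨hω, by rw [← hmem00 ω hω]; exact hle⟩
    · rintro ⟨hω, hle⟩
      exact ⟨hω, by rw [hmem00 ω hω]; exact hle⟩
  have hcondeq : (μ[|({ω | G ω = 0} ∩ V ⁻¹' QC1) ∩ {ω | T ω = 1}])
      = (μ[|({ω | G ω = 0} ∩ V ⁻¹' QC) ∩ {ω | T ω = 1}]) := by
    exact aux_cond_congr (hC1m.inter hT1m) (hCm.inter hT1m) hae01
  have hG : ∀ x, ccdf μ (dcell D G T d 0 1) Y x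
      = ((μ[|({ω | G ω = 0} ∩ V ⁻¹' QC) ∩ {ω | T ω = 1}]) {ω | φB (Ud ω) ≤ x}).toReal := by
    intro x
    show ((μ[|dcell D G T d 0 1]) {ω | Y ω ≤ x}).toReal = _
    rw [hdc01, ← hcondeq]
    congr 1
    apply aux_cond_set_congr _ _ (hC1m.inter hT1m)
    ext ω
    simp only [mem_inter_iff, mem_setOf_eq]
    constructor
    · rintro ⟨hω, hle⟩
      exact ⟨hω, by rw [← hmem01 ω hω]; exact hle⟩
    · rintro ⟨hω, hle⟩
      exact ⟨hω, by rw [hmem01 ω hω]; exact hle⟩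
  have hCsupp1 : (μ[|({ω | G ω = 0} ∩ V ⁻¹' QC) ∩ {ω | T ω = 1}]) {ω | φB (Ud ω) ∉ SY} = 0 := by
    rw [← hcondeq]
    have hswap : (μ[|({ω | G ω = 0} ∩ V ⁻¹' QC1) ∩ {ω | T ω = 1}]) {ω | φB (Ud ω) ∉ SY}
        = (μ[|({ω | G ω = 0} ∩ V ⁻¹' QC1) ∩ {ω | T ω = 1}]) {ω | Y ω ∉ SY} := by
      apply aux_cond_set_congr _ _ (hC1m.inter hT1m)
      ext ω
      simp only [mem_inter_iff, mem_setOf_eq]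
      constructor
      · rintro ⟨hω, hns⟩
        exact ⟨hω, by rw [hmem01 ω hω]; exact hns⟩
      · rintro ⟨hω, hns⟩
        exact ⟨hω, by rw [← hmem01 ω hω]; exact hns⟩
    rw [hswap, ← hdc01]
    exact aux_null_outside hYm hSYm hsupp01
  have hWsupp0 : (μ[|({ω | G ω = 1} ∩ V ⁻¹' QW) ∩ {ω | T ω = 0}]) {ω | φA (Ud ω) ∉ SY} = 0 := by
    have hswap : (μ[|({ω | G ω = 1} ∩ V ⁻¹' QW) ∩ {ω | T ω = 0}]) {ω | φA (Ud ω) ∉ SY}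
        = (μ[|({ω | G ω = 1} ∩ V ⁻¹' QW) ∩ {ω | T ω = 0}]) {ω | Y ω ∉ SY} := by
      apply aux_cond_set_congr _ _ (hWm.inter hT0m)
      ext ω
      simp only [mem_inter_iff, mem_setOf_eq]
      constructor
      · rintro ⟨hω, hns⟩
        exact ⟨hω, by rw [hmem10 ω hω]; exact hns⟩
      · rintro ⟨hω, hns⟩
        exact ⟨hω, by rw [← hmem10 ω hω]; exact hns⟩
    rw [hswap, ← hdc10]
    exact aux_null_outside hYm hSYm hsupp10
  haveI hprob10 : IsProbabilityMeasure (μ[|dcell D G T d 1 0]) :=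
    cond_isProbabilityMeasure hpos10
  have hWatom : ∀ z : ℝ, (μ[|({ω | G ω = 1} ∩ V ⁻¹' QW) ∩ {ω | T ω = 0}]) {ω | φA (Ud ω) = z}
      = 0 := by
    intro z
    have hswap : (μ[|({ω | G ω = 1} ∩ V ⁻¹' QW) ∩ {ω | T ω = 0}]) {ω | φA (Ud ω) = z}
        = (μ[|({ω | G ω = 1} ∩ V ⁻¹' QW) ∩ {ω | T ω = 0}]) {ω | Y ω = z} := by
      apply aux_cond_set_congr _ _ (hWm.inter hT0m)
      ext ω
      simp only [mem_inter_iff, mem_setOf_eq]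
      constructor
      · rintro ⟨hω, hv⟩
        exact ⟨hω, by rw [hmem10 ω hω]; exact hv⟩
      · rintro ⟨hω, hv⟩
        exact ⟨hω, by rw [← hmem10 ω hω]; exact hv⟩
    rw [hswap, ← hdc10]
    exact aux_null_singleton hYm hcont10 z
  -- the key CIC identity
  have hkey := aux_key μ Ud T φA φB hUdm hTm hφA hφB
    ({ω | G ω = 0} ∩ V ⁻¹' QC) ({ω | G ω = 1} ∩ V ⁻¹' QW) hCm hWm SY hord
    hUindC hUindW hCT0pos hCT1pos hWT0pos hWT1pos
    (ccdf μ (dcell D G T d 0 0) Y) (ccdf μ (dcell D G T d 0 1) Y)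
    hF hG hsm00 hsm01 hCsupp1 hWsupp0 hWatom y
  -- identify the observed CIC-transformed cdf with the key lemma's left-hand side
  have hZ : ccdf μ (dcell D G T d 1 0)
      (fun ω => quantile (ccdf μ (dcell D G T d 0 1) Y)
        (ccdf μ (dcell D G T d 0 0) Y (Y ω))) y
      = ((μ[|({ω | G ω = 1} ∩ V ⁻¹' QW) ∩ {ω | T ω = 0}])
          {ω | quantile (ccdf μ (dcell D G T d 0 1) Y)
            (ccdf μ (dcell D G T d 0 0) Y (φA (Ud ω))) ≤ y}).toReal := by
    show ((μ[|dcell D G T d 1 0]) _).toReal = _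
    rw [hdc10]
    congr 1
    apply aux_cond_set_congr _ _ (hWm.inter hT0m)
    ext ω
    simp only [mem_inter_iff, mem_setOf_eq]
    constructor
    · rintro ⟨hω, hle⟩
      exact ⟨hω, by rw [← hmem10 ω hω]; exact hle⟩
    · rintro ⟨hω, hle⟩
      exact ⟨hω, by rw [hmem10 ω hω]; exact hle⟩
  -- the right-hand side via independence
  have hRHS : μ ({ω | Yd ω ≤ y} ∩ ({ω | G ω = 1} ∩ V ⁻¹' QW ∩ {ω | T ω = 1}))
      = (μ[|{ω | G ω = 1}]) (V ⁻¹' QW) * μ ({ω | G ω = 1} ∩ {ω | T ω = 1})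
        * (μ[|({ω | G ω = 1} ∩ V ⁻¹' QW) ∩ {ω | T ω = 1}]) {ω | φB (Ud ω) ≤ y} := by
    rw [Set.inter_comm, aux_inter_cond (hWm.inter hT1m) {ω | Yd ω ≤ y}]
    have hswap : (μ[|({ω | G ω = 1} ∩ V ⁻¹' QW) ∩ {ω | T ω = 1}]) {ω | Yd ω ≤ y}
        = (μ[|({ω | G ω = 1} ∩ V ⁻¹' QW) ∩ {ω | T ω = 1}]) {ω | φB (Ud ω) ≤ y} := by
      apply aux_cond_set_congr _ _ (hWm.inter hT1m)
      ext ω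
      simp only [mem_inter_iff, mem_setOf_eq]
      constructor
      · rintro ⟨hω, hle⟩
        exact ⟨hω, by rw [← hrep1 ω hω.2]; exact hle⟩
      · rintro ⟨hω, hle⟩
        exact ⟨hω, by rw [hrep1 ω hω.2]; exact hle⟩
    rw [hswap, hWsplit 1]
    ring
  -- put everything together in real arithmetic
  have hm1R : (μ ({ω | G ω = 1} ∩ {ω | T ω = 1})).toReal ≠ 0 :=
    ENNReal.toReal_ne_zero.mpr ⟨hposc11, measure_ne_top _ _⟩
  rw [hP10, hZ, hkey, hRHS]
  rw [ENNReal.toReal_mul, ENNReal.toReal_mul]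
  field_simp

end AuxMain

lemma aux_ccdf_eq {Ω : Type*} [MeasurableSpace Ω] {μ : Measure Ω} {A : Set Ω}
    (hA : MeasurableSet A) (R : Ω → ℝ) (y : ℝ) :
    ccdf μ A R y = (μ (A ∩ {ω | R ω ≤ y})).toReal / (μ A).toReal :=
  aux_cond_toReal hA _


set_option maxHeartbeats 2000000

/-- Theorem 3 (quantile part): under Assumptions 1, 2, 6, 7 and 8,
`F_{CIC,1}⁻¹(q) − F_{CIC,0}⁻¹(q) = τ_q` for every `q ∈ (0,1)`. -/
theorem wald_cic_quantile
    {Ω : Type*} [MeasurableSpace Ω] (μ : Measure Ω) [IsProbabilityMeasure μ]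
    (Y D G T V Y0 Y1 : Ω → ℝ) (v : ℝ → ℝ → ℝ)
    (hYm : Measurable Y) (hDm : Measurable D) (hGm : Measurable G)
    (hTm : Measurable T) (hVm : Measurable V)
    (hY0m : Measurable Y0) (hY1m : Measurable Y1)
    (hG01 : ∀ ω, G ω = 0 ∨ G ω = 1) (hT01 : ∀ ω, T ω = 0 ∨ T ω = 1)
    (hYobs : ∀ ω, Y ω = D ω * Y1 ω + (1 - D ω) * Y0 ω)
    -- Assumption 1 (treatment participation equation, with normalization v₁₀ = v₀₀)
    (hsel : ∀ ω, D ω = if v (G ω) (T ω) ≤ V ω then 1 else 0)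
    (hindep : ∀ g : ℝ, IndepFun V T (μ[|{ω | G ω = g}]))
    (hnorm : v 1 0 = v 0 0)
    -- Assumption 2 (first stage)
    (hfs1 : cexp μ (cell G T 1 0) D < cexp μ (cell G T 1 1) D)
    (hfs2 : cexp μ (cell G T 0 1) D - cexp μ (cell G T 0 0) D
          < cexp μ (cell G T 1 1) D - cexp μ (cell G T 1 0) D)
    -- Assumption 6 (stable control group)
    (h6 : 0 < cexp μ (cell G T 0 1) D ∧ cexp μ (cell G T 0 1) D = cexp μ (cell G T 0 0) D
          ∧ cexp μ (cell G T 0 0) D < 1)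
    -- Assumption 7 (monotonicity and time invariance of unobservables)
    (h₀ h₁ : ℝ → ℝ → ℝ) (U0 U1 : Ω → ℝ)
    (hU0m : Measurable U0) (hU1m : Measurable U1)
    (hY0rep : ∀ ω, Y0 ω = h₀ (U0 ω) (T ω)) (hY1rep : ∀ ω, Y1 ω = h₁ (U1 ω) (T ω))
    (hmono : ∀ t : ℝ, (t = 0 ∨ t = 1) →
      StrictMono (fun u => h₀ u t) ∧ StrictMono (fun u => h₁ u t))
    (hUindep : ∀ g d0 : ℝ,
      IndepFun U0 T (μ[|{ω | G ω = g ∧ Dpot V G v 0 ω = d0}])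
      ∧ IndepFun U1 T (μ[|{ω | G ω = g ∧ Dpot V G v 0 ω = d0}]))
    -- Assumption 8 (data restrictions)
    (SY : Set ℝ) (hSYclosed : IsClosed SY) (hSYinterval : SY.OrdConnected)
    (hSY : msupport (Measure.map Y μ) = SY)
    (hsupp : ∀ d g t : ℝ, (d = 0 ∨ d = 1) → (g = 0 ∨ g = 1) → (t = 0 ∨ t = 1) →
      msupport (Measure.map Y (μ[|dcell D G T d g t])) = SY)
    (hcdfreg : ∀ d g t : ℝ, (d = 0 ∨ d = 1) → (g = 0 ∨ g = 1) → (t = 0 ∨ t = 1) →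
      Continuous (ccdf μ (dcell D G T d g t) Y)
      ∧ StrictMonoOn (ccdf μ (dcell D G T d g t) Y) SY) :
    -- Conclusion : for every q ∈ (0,1), F_{CIC,1}⁻¹(q) − F_{CIC,0}⁻¹(q) = τ_q
    ∀ q ∈ Set.Ioo (0:ℝ) 1,
      quantile (fun y =>
          (((μ[|cell G T 1 1]) {ω | D ω = 1}).toReal * ccdf μ (dcell D G T 1 1 1) Y y
            - ((μ[|cell G T 1 0]) {ω | D ω = 1}).toReal
              * ccdf μ (dcell D G T 1 1 0)
                  (fun ω => quantile (ccdf μ (dcell D G T 1 0 1) Y)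
                    (ccdf μ (dcell D G T 1 0 0) Y (Y ω))) y)
          / (((μ[|cell G T 1 1]) {ω | D ω = 1}).toReal
              - ((μ[|cell G T 1 0]) {ω | D ω = 1}).toReal)) q
      - quantile (fun y =>
          (((μ[|cell G T 1 1]) {ω | D ω = 0}).toReal * ccdf μ (dcell D G T 0 1 1) Y y
            - ((μ[|cell G T 1 0]) {ω | D ω = 0}).toReal
              * ccdf μ (dcell D G T 0 1 0)
                  (fun ω => quantile (ccdf μ (dcell D G T 0 0 1) Y)
                    (ccdf μ (dcell D G T 0 0 0) Y (Y ω))) y)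
          / (((μ[|cell G T 1 1]) {ω | D ω = 0}).toReal
              - ((μ[|cell G T 1 0]) {ω | D ω = 0}).toReal)) q
      = quantile (ccdf μ ({ω | Dpot V G v 0 ω < Dpot V G v 1 ω ∧ G ω = 1}
            ∩ {ω | T ω = 1}) Y1) q
        - quantile (ccdf μ ({ω | Dpot V G v 0 ω < Dpot V G v 1 ω ∧ G ω = 1}
            ∩ {ω | T ω = 1}) Y0) q := by
  
  classical
  have hG1m : MeasurableSet {ω | G ω = 1} := hGm (measurableSet_singleton 1)
  have hG0m : MeasurableSet {ω | G ω = 0} := hGm (measurableSet_singleton 0)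
  have hT0m : MeasurableSet {ω | T ω = 0} := hTm (measurableSet_singleton 0)
  have hT1m : MeasurableSet {ω | T ω = 1} := hTm (measurableSet_singleton 1)
  have hSYm : MeasurableSet SY := hSYclosed.measurableSet
  have hIcim : ∀ c : ℝ, MeasurableSet (Ici c : Set ℝ) := fun _ => measurableSet_Ici
  have hcelleq : ∀ g t : ℝ, cell G T g t = {ω | G ω = g} ∩ {ω | T ω = t} := fun g t => rfl
  have hcellm : ∀ g t : ℝ, MeasurableSet (cell G T g t) := by
    intro g t
    rw [hcelleq]
    exact (hGm (measurableSet_singleton g)).inter (hTm (measurableSet_singleton t))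
  have hdceq1 : ∀ g t : ℝ,
      dcell D G T 1 g t = {ω | G ω = g} ∩ V ⁻¹' Ici (v g t) ∩ {ω | T ω = t} := by
    intro g t
    ext ω
    simp only [dcell, mem_setOf_eq, mem_inter_iff, mem_preimage, mem_Ici]
    constructor
    · rintro ⟨hD, hg, ht⟩
      rw [hsel ω, hg, ht] at hD
      refine ⟨⟨hg, ?_⟩, ht⟩
      by_contra hc
      rw [if_neg hc] at hD
      norm_num at hD
    · rintro ⟨⟨hg, hV⟩, ht⟩
      refine ⟨?_, hg, ht⟩
      rw [hsel ω, hg, ht, if_pos hV]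
  have hdceq0 : ∀ g t : ℝ,
      dcell D G T 0 g t = {ω | G ω = g} ∩ V ⁻¹' ((Ici (v g t))ᶜ) ∩ {ω | T ω = t} := by
    intro g t
    ext ω
    simp only [dcell, mem_setOf_eq, mem_inter_iff, mem_preimage, mem_compl_iff, mem_Ici]
    constructor
    · rintro ⟨hD, hg, ht⟩
      rw [hsel ω, hg, ht] at hD
      refine ⟨⟨hg, ?_⟩, ht⟩
      intro hc
      rw [if_pos hc] at hD
      norm_num at hD
    · rintro ⟨⟨hg, hV⟩, ht⟩
      refine ⟨?_, hg, ht⟩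
      rw [hsel ω, hg, ht, if_neg hV]
  have hSYne : SY.Nonempty := by
    haveI := Measure.isProbabilityMeasure_map (μ := μ) hYm.aemeasurable
    have hne : (Measure.map Y μ) ≠ 0 := IsProbabilityMeasure.ne_zero _
    have h := aux_msupport_nonempty _ hne
    rwa [hSY] at h
  have hdpos : ∀ d g t : ℝ, (d = 0 ∨ d = 1) → (g = 0 ∨ g = 1) → (t = 0 ∨ t = 1) →
      μ (dcell D G T d g t) ≠ 0 := fun d g t hd hg ht =>
    aux_pos_of_msupport hSYne (hsupp d g t hd hg ht)
  have hD01 : ∀ ω, D ω = 0 ∨ D ω = 1 := by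
    intro ω
    rw [hsel ω]
    by_cases h : v (G ω) (T ω) ≤ V ω
    · right; rw [if_pos h]
    · left; rw [if_neg h]
  have hcellD1 : ∀ g t : ℝ,
      (cell G T g t) ∩ {ω | D ω = 1} = (cell G T g t) ∩ V ⁻¹' Ici (v g t) := by
    intro g t
    ext ω
    simp only [hcelleq, mem_inter_iff, mem_setOf_eq, mem_preimage, mem_Ici]
    constructor
    · rintro ⟨⟨hg, ht⟩, hD⟩
      rw [hsel ω, hg, ht] at hD
      refine ⟨⟨hg, ht⟩, ?_⟩
      by_contra hc
      rw [if_neg hc] at hD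
      norm_num at hD
    · rintro ⟨⟨hg, ht⟩, hV⟩
      exact ⟨⟨hg, ht⟩, by rw [hsel ω, hg, ht, if_pos hV]⟩
  have hcellD0 : ∀ g t : ℝ,
      (cell G T g t) ∩ {ω | D ω = 0} = (cell G T g t) ∩ V ⁻¹' ((Ici (v g t))ᶜ) := by
    intro g t
    ext ω
    simp only [hcelleq, mem_inter_iff, mem_setOf_eq, mem_preimage, mem_compl_iff, mem_Ici]
    constructor
    · rintro ⟨⟨hg, ht⟩, hD⟩
      rw [hsel ω, hg, ht] at hD
      refine ⟨⟨hg, ht⟩, ?_⟩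
      intro hc
      rw [if_pos hc] at hD
      norm_num at hD
    · rintro ⟨⟨hg, ht⟩, hV⟩
      exact ⟨⟨hg, ht⟩, by rw [hsel ω, hg, ht, if_neg hV]⟩
  have hcellpos : ∀ g t : ℝ, (g = 0 ∨ g = 1) → (t = 0 ∨ t = 1) → μ (cell G T g t) ≠ 0 := by
    intro g t hg ht h0
    apply hdpos 1 g t (Or.inr rfl) hg ht
    apply measure_mono_null _ h0
    rw [hdceq1 g t, hcelleq g t]
    intro ω hω
    exact ⟨hω.1.1, hω.2⟩
  have hP1 : ∀ g t : ℝ, (g = 0 ∨ g = 1) → (t = 0 ∨ t = 1) →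
      (μ[|cell G T g t]) {ω | D ω = 1} = (μ[|{ω | G ω = g}]) (V ⁻¹' Ici (v g t)) := by
    intro g t hg ht
    have hcp : μ ({ω | G ω = g} ∩ {ω | T ω = t}) ≠ 0 := by
      rw [← hcelleq g t]; exact hcellpos g t hg ht
    rw [aux_cond_set_congr _ _ (hcellm g t) (hcellD1 g t), hcelleq g t]
    exact aux_cond_restrict_indep (hGm (measurableSet_singleton g)) hVm hTm (hindep g)
      hcp (hIcim _)
  have hP0 : ∀ g t : ℝ, (g = 0 ∨ g = 1) → (t = 0 ∨ t = 1) →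
      (μ[|cell G T g t]) {ω | D ω = 0} = (μ[|{ω | G ω = g}]) (V ⁻¹' ((Ici (v g t))ᶜ)) := by
    intro g t hg ht
    have hcp : μ ({ω | G ω = g} ∩ {ω | T ω = t}) ≠ 0 := by
      rw [← hcelleq g t]; exact hcellpos g t hg ht
    rw [aux_cond_set_congr _ _ (hcellm g t) (hcellD0 g t), hcelleq g t]
    exact aux_cond_restrict_indep (hGm (measurableSet_singleton g)) hVm hTm (hindep g)
      hcp (hIcim _).compl
  have hcexp' : ∀ g t : ℝ, cexp μ (cell G T g t) D
      = ((μ[|cell G T g t]) {ω | D ω = 1}).toReal :=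
    fun g t => aux_cexp_eq _ hDm hD01
  have hfs1' : ((μ[|{ω | G ω = 1}]) (V ⁻¹' Ici (v 1 0))).toReal
      < ((μ[|{ω | G ω = 1}]) (V ⁻¹' Ici (v 1 1))).toReal := by
    have h := hfs1
    rw [hcexp' 1 0, hcexp' 1 1, hP1 1 0 (Or.inr rfl) (Or.inl rfl),
      hP1 1 1 (Or.inr rfl) (Or.inr rfl)] at h
    exact h
  have hab : v 1 1 < v 1 0 := by
    by_contra hc
    push_neg at hc
    have hsub : V ⁻¹' Ici (v 1 1) ⊆ V ⁻¹' Ici (v 1 0) := fun ω hω => le_trans hc hω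
    exact absurd hfs1'
      (not_lt.mpr (ENNReal.toReal_mono (measure_ne_top _ _) (measure_mono hsub)))
  have hstabE : (μ[|{ω | G ω = 0}]) (V ⁻¹' Ici (v 0 1))
      = (μ[|{ω | G ω = 0}]) (V ⁻¹' Ici (v 0 0)) := by
    have h := h6.2.1
    rw [hcexp' 0 1, hcexp' 0 0, hP1 0 1 (Or.inl rfl) (Or.inr rfl),
      hP1 0 0 (Or.inl rfl) (Or.inl rfl)] at h
    exact (ENNReal.toReal_eq_toReal_iff' (measure_ne_top _ _) (measure_ne_top _ _)).mp h
  have hstab_ae : (V ⁻¹' Ici (v 0 1) : Set Ω) =ᵐ[μ[|{ω | G ω = 0}]] V ⁻¹' Ici (v 0 0) := by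
    rcases le_total (v 0 0) (v 0 1) with hle | hle
    · have hsub : V ⁻¹' Ici (v 0 1) ⊆ V ⁻¹' Ici (v 0 0) := fun ω hω => le_trans hle hω
      rw [ae_eq_set]
      refine ⟨by rw [diff_eq_empty.mpr hsub]; exact measure_empty, ?_⟩
      rw [measure_diff hsub (hVm (hIcim _)).nullMeasurableSet (measure_ne_top _ _),
        hstabE, tsub_self]
    · have hsub : V ⁻¹' Ici (v 0 0) ⊆ V ⁻¹' Ici (v 0 1) := fun ω hω => le_trans hle hω
      rw [ae_eq_set]
      refine ⟨?_, by rw [diff_eq_empty.mpr hsub]; exact measure_empty⟩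
      rw [measure_diff hsub (hVm (hIcim _)).nullMeasurableSet (measure_ne_top _ _),
        hstabE, tsub_self]
  have hstabnull := ae_eq_set.mp hstab_ae
  have hnullA : μ ({ω | G ω = 0} ∩ (V ⁻¹' Ici (v 0 1) \ V ⁻¹' Ici (v 0 0))) = 0 := by
    rw [aux_inter_cond hG0m, hstabnull.1, zero_mul]
  have hnullB : μ ({ω | G ω = 0} ∩ (V ⁻¹' Ici (v 0 0) \ V ⁻¹' Ici (v 0 1))) = 0 := by
    rw [aux_inter_cond hG0m, hstabnull.2, zero_mul]
  have hae1 : ({ω | G ω = 0} ∩ V ⁻¹' Ici (v 0 1) ∩ {ω | T ω = 1} : Set Ω)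
      =ᵐ[μ] ({ω | G ω = 0} ∩ V ⁻¹' Ici (v 0 0) ∩ {ω | T ω = 1} : Set Ω) := by
    rw [ae_eq_set]
    constructor
    · apply measure_mono_null _ hnullA
      rintro ω ⟨⟨⟨hg, hv⟩, ht⟩, hn⟩
      exact ⟨hg, hv, fun hc => hn ⟨⟨hg, hc⟩, ht⟩⟩
    · apply measure_mono_null _ hnullB
      rintro ω ⟨⟨⟨hg, hv⟩, ht⟩, hn⟩
      exact ⟨hg, hv, fun hc => hn ⟨⟨hg, hc⟩, ht⟩⟩
  have hae0 : ({ω | G ω = 0} ∩ V ⁻¹' ((Ici (v 0 1))ᶜ) ∩ {ω | T ω = 1} : Set Ω)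
      =ᵐ[μ] ({ω | G ω = 0} ∩ V ⁻¹' ((Ici (v 0 0))ᶜ) ∩ {ω | T ω = 1} : Set Ω) := by
    rw [ae_eq_set]
    constructor
    · apply measure_mono_null _ hnullB
      rintro ω ⟨⟨⟨hg, hv⟩, ht⟩, hn⟩
      refine ⟨hg, ?_, hv⟩
      by_contra hc
      exact hn ⟨⟨hg, hc⟩, ht⟩
    · apply measure_mono_null _ hnullA
      rintro ω ⟨⟨⟨hg, hv⟩, ht⟩, hn⟩
      refine ⟨hg, ?_, hv⟩
      by_contra hc
      exact hn ⟨⟨hg, hc⟩, ht⟩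
  have hDpotW1 : {ω | G ω = 1 ∧ Dpot V G v 0 ω = 1}
      = {ω | G ω = 1} ∩ V ⁻¹' Ici (v 1 0) := by
    ext ω
    simp only [Dpot, mem_setOf_eq, mem_inter_iff, mem_preimage, mem_Ici]
    constructor
    · rintro ⟨hg, hd⟩
      rw [hg] at hd
      refine ⟨hg, ?_⟩
      by_contra hc
      rw [if_neg hc] at hd
      norm_num at hd
    · rintro ⟨hg, hv⟩
      exact ⟨hg, by rw [hg, if_pos hv]⟩
  have hDpotW0 : {ω | G ω = 1 ∧ Dpot V G v 0 ω = 0}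
      = {ω | G ω = 1} ∩ V ⁻¹' ((Ici (v 1 0))ᶜ) := by
    ext ω
    simp only [Dpot, mem_setOf_eq, mem_inter_iff, mem_preimage, mem_compl_iff, mem_Ici]
    constructor
    · rintro ⟨hg, hd⟩
      rw [hg] at hd
      refine ⟨hg, ?_⟩
      intro hc
      rw [if_pos hc] at hd
      norm_num at hd
    · rintro ⟨hg, hv⟩
      exact ⟨hg, by rw [hg, if_neg hv]⟩
  have hDpotC1 : {ω | G ω = 0 ∧ Dpot V G v 0 ω = 1}
      = {ω | G ω = 0} ∩ V ⁻¹' Ici (v 0 0) := by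
    ext ω
    simp only [Dpot, mem_setOf_eq, mem_inter_iff, mem_preimage, mem_Ici]
    constructor
    · rintro ⟨hg, hd⟩
      rw [hg] at hd
      refine ⟨hg, ?_⟩
      by_contra hc
      rw [if_neg hc] at hd
      norm_num at hd
    · rintro ⟨hg, hv⟩
      exact ⟨hg, by rw [hg, if_pos hv]⟩
  have hDpotC0 : {ω | G ω = 0 ∧ Dpot V G v 0 ω = 0}
      = {ω | G ω = 0} ∩ V ⁻¹' ((Ici (v 0 0))ᶜ) := by
    ext ω
    simp only [Dpot, mem_setOf_eq, mem_inter_iff, mem_preimage, mem_compl_iff, mem_Ici]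
    constructor
    · rintro ⟨hg, hd⟩
      rw [hg] at hd
      refine ⟨hg, ?_⟩
      intro hc
      rw [if_pos hc] at hd
      norm_num at hd
    · rintro ⟨hg, hv⟩
      exact ⟨hg, by rw [hg, if_neg hv]⟩
  have hSset : ({ω | Dpot V G v 0 ω < Dpot V G v 1 ω ∧ G ω = 1} : Set Ω)
      = {ω | G ω = 1} ∩ (V ⁻¹' Ici (v 1 1) \ V ⁻¹' Ici (v 1 0)) := by
    ext ω
    simp only [Dpot, mem_setOf_eq, mem_inter_iff, mem_diff, mem_preimage, mem_Ici]
    constructor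
    · rintro ⟨hlt, hg⟩
      rw [hg] at hlt
      by_cases hb : v 1 0 ≤ V ω
      · rw [if_pos hb] at hlt
        by_cases ha : v 1 1 ≤ V ω
        · rw [if_pos ha] at hlt
          exact absurd hlt (lt_irrefl 1)
        · rw [if_neg ha] at hlt
          norm_num at hlt
      · rw [if_neg hb] at hlt
        by_cases ha : v 1 1 ≤ V ω
        · exact ⟨hg, ha, hb⟩
        · rw [if_neg ha] at hlt
          exact absurd hlt (lt_irrefl 0)
    · rintro ⟨hg, ha, hb⟩
      refine ⟨?_, hg⟩
      rw [hg, if_neg hb, if_pos ha]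
      norm_num
  have hm1pos : μ ({ω | G ω = 1} ∩ {ω | T ω = 1}) ≠ 0 := by
    rw [← hcelleq 1 1]; exact hcellpos 1 1 (Or.inr rfl) (Or.inr rfl)
  have hm1R : (μ ({ω | G ω = 1} ∩ {ω | T ω = 1})).toReal ≠ 0 :=
    ENNReal.toReal_ne_zero.mpr ⟨hm1pos, measure_ne_top _ _⟩
  have hgapm : MeasurableSet (V ⁻¹' Ici (v 1 1) \ V ⁻¹' Ici (v 1 0)) :=
    (hVm (hIcim _)).diff (hVm (hIcim _))
  have hsubBA : V ⁻¹' Ici (v 1 0) ⊆ V ⁻¹' Ici (v 1 1) := fun ω hω => le_trans hab.le hω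
  have hkaddR : ((μ[|{ω | G ω = 1}]) (V ⁻¹' Ici (v 1 1))).toReal
      = ((μ[|{ω | G ω = 1}]) (V ⁻¹' Ici (v 1 0))).toReal
        + ((μ[|{ω | G ω = 1}]) (V ⁻¹' Ici (v 1 1) \ V ⁻¹' Ici (v 1 0))).toReal := by
    have hkadd : (μ[|{ω | G ω = 1}]) (V ⁻¹' Ici (v 1 1))
        = (μ[|{ω | G ω = 1}]) (V ⁻¹' Ici (v 1 0))
          + (μ[|{ω | G ω = 1}]) (V ⁻¹' Ici (v 1 1) \ V ⁻¹' Ici (v 1 0)) := by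
      conv_lhs => rw [← Set.union_diff_cancel hsubBA]
      exact measure_union disjoint_sdiff_right hgapm
    rw [hkadd, ENNReal.toReal_add (measure_ne_top _ _) (measure_ne_top _ _)]
  have hσpos : 0 < ((μ[|{ω | G ω = 1}]) (V ⁻¹' Ici (v 1 1) \ V ⁻¹' Ici (v 1 0))).toReal := by
    linarith [hfs1', hkaddR]
  have hST1 : μ ({ω | G ω = 1} ∩ (V ⁻¹' Ici (v 1 1) \ V ⁻¹' Ici (v 1 0)) ∩ {ω | T ω = 1})
      = (μ[|{ω | G ω = 1}]) (V ⁻¹' Ici (v 1 1) \ V ⁻¹' Ici (v 1 0))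
        * μ ({ω | G ω = 1} ∩ {ω | T ω = 1}) := by
    have h := aux_indep_cell hG1m hVm hTm (hindep 1)
      ((hIcim (v 1 1)).diff (hIcim (v 1 0))) 1
    rw [Set.preimage_diff] at h
    exact h
  have hSTR : (μ ({ω | G ω = 1} ∩ (V ⁻¹' Ici (v 1 1) \ V ⁻¹' Ici (v 1 0)) ∩ {ω | T ω = 1})).toReal
      = ((μ[|{ω | G ω = 1}]) (V ⁻¹' Ici (v 1 1) \ V ⁻¹' Ici (v 1 0))).toReal
        * (μ ({ω | G ω = 1} ∩ {ω | T ω = 1})).toReal := by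
    rw [hST1, ENNReal.toReal_mul]
  -- ===================== d = 1 =====================
  have hmain1 : ∀ y : ℝ,
      (((μ[|cell G T 1 1]) {ω | D ω = 1}).toReal * ccdf μ (dcell D G T 1 1 1) Y y
        - ((μ[|cell G T 1 0]) {ω | D ω = 1}).toReal
          * ccdf μ (dcell D G T 1 1 0)
              (fun ω => quantile (ccdf μ (dcell D G T 1 0 1) Y)
                (ccdf μ (dcell D G T 1 0 0) Y (Y ω))) y)
        / (((μ[|cell G T 1 1]) {ω | D ω = 1}).toReal
            - ((μ[|cell G T 1 0]) {ω | D ω = 1}).toReal)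
      = ccdf μ ({ω | Dpot V G v 0 ω < Dpot V G v 1 ω ∧ G ω = 1}
          ∩ {ω | T ω = 1}) Y1 y := by
    intro y
    have hY1d : ∀ ω, D ω = 1 → Y ω = Y1 ω := by
      intro ω hD
      rw [hYobs ω, hD]; ring
    have htrans := aux_main μ Y D G T V Y1 U1 1 hYm hTm hVm hU1m hG1m hG0m
      (fun u => h₁ u 0) (fun u => h₁ u 1) (hmono 0 (Or.inl rfl)).2 (hmono 1 (Or.inr rfl)).2
      (fun ω ht => by rw [hY1rep ω, ht]) (fun ω ht => by rw [hY1rep ω, ht]) hY1d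
      (Ici (v 1 0)) (Ici (v 0 0)) (Ici (v 0 1)) (hIcim _) (hIcim _) (hIcim _)
      (hdceq1 1 0) (hdceq1 0 0) (hdceq1 0 1) hae1
      (by rw [← hDpotC1]; exact (hUindep 0 1).2)
      (by rw [← hDpotW1]; exact (hUindep 1 1).2)
      (hindep 1) SY hSYinterval hSYm
      (hdpos 1 1 0 (Or.inr rfl) (Or.inr rfl) (Or.inl rfl))
      (hdpos 1 0 0 (Or.inr rfl) (Or.inl rfl) (Or.inl rfl))
      (hdpos 1 0 1 (Or.inr rfl) (Or.inl rfl) (Or.inr rfl))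
      hm1pos
      (hsupp 1 1 0 (Or.inr rfl) (Or.inr rfl) (Or.inl rfl))
      (hsupp 1 0 1 (Or.inr rfl) (Or.inl rfl) (Or.inr rfl))
      (hcdfreg 1 1 0 (Or.inr rfl) (Or.inr rfl) (Or.inl rfl)).1
      (hcdfreg 1 0 0 (Or.inr rfl) (Or.inl rfl) (Or.inl rfl)).2
      (hcdfreg 1 0 1 (Or.inr rfl) (Or.inl rfl) (Or.inr rfl)).2
      (hP1 1 0 (Or.inr rfl) (Or.inl rfl)) y
    have hcd111 : cell G T 1 1 ∩ {ω | D ω = 1} = dcell D G T 1 1 1 := by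
      ext ω
      simp only [cell, dcell, mem_inter_iff, mem_setOf_eq]
      tauto
    have hdcm111 : MeasurableSet (dcell D G T 1 1 1) := by
      rw [hdceq1 1 1]
      exact (hG1m.inter (hVm (hIcim _))).inter hT1m
    have hd111R : (μ (dcell D G T 1 1 1)).toReal ≠ 0 :=
      ENNReal.toReal_ne_zero.mpr
        ⟨hdpos 1 1 1 (Or.inr rfl) (Or.inr rfl) (Or.inr rfl), measure_ne_top _ _⟩
    have hYset111 : dcell D G T 1 1 1 ∩ {ω | Y ω ≤ y}
        = dcell D G T 1 1 1 ∩ {ω | Y1 ω ≤ y} := by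
      ext ω
      simp only [dcell, mem_inter_iff, mem_setOf_eq]
      constructor
      · rintro ⟨⟨hD, hg, ht⟩, hle⟩
        exact ⟨⟨hD, hg, ht⟩, by rw [← hY1d ω hD]; exact hle⟩
      · rintro ⟨⟨hD, hg, ht⟩, hle⟩
        exact ⟨⟨hD, hg, ht⟩, by rw [hY1d ω hD]; exact hle⟩
    have hP11F : ((μ[|cell G T 1 1]) {ω | D ω = 1}).toReal * ccdf μ (dcell D G T 1 1 1) Y y
        = (μ (dcell D G T 1 1 1 ∩ {ω | Y1 ω ≤ y})).toReal
          / (μ ({ω | G ω = 1} ∩ {ω | T ω = 1})).toReal := by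
      rw [aux_cond_toReal (hcellm 1 1), aux_ccdf_eq hdcm111, hcd111, hYset111, hcelleq 1 1]
      field_simp
    have hdisj : Disjoint
        ({ω | Y1 ω ≤ y} ∩ ({ω | G ω = 1} ∩ V ⁻¹' Ici (v 1 0) ∩ {ω | T ω = 1}))
        ({ω | Y1 ω ≤ y} ∩ ({ω | G ω = 1}
          ∩ (V ⁻¹' Ici (v 1 1) \ V ⁻¹' Ici (v 1 0)) ∩ {ω | T ω = 1})) := by
      rw [Set.disjoint_left]
      rintro ω ⟨_, ⟨_, hb⟩, _⟩ ⟨_, ⟨_, _, hnb⟩, _⟩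
      exact hnb hb
    have hmeasB : MeasurableSet ({ω | Y1 ω ≤ y} ∩ ({ω | G ω = 1}
        ∩ (V ⁻¹' Ici (v 1 1) \ V ⁻¹' Ici (v 1 0)) ∩ {ω | T ω = 1})) :=
      (hY1m measurableSet_Iic).inter ((hG1m.inter hgapm).inter hT1m)
    have hsplitR : (μ (dcell D G T 1 1 1 ∩ {ω | Y1 ω ≤ y})).toReal
        = (μ ({ω | Y1 ω ≤ y} ∩ ({ω | G ω = 1} ∩ V ⁻¹' Ici (v 1 0) ∩ {ω | T ω = 1}))).toReal
          + (μ ({ω | Y1 ω ≤ y} ∩ ({ω | G ω = 1}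
              ∩ (V ⁻¹' Ici (v 1 1) \ V ⁻¹' Ici (v 1 0)) ∩ {ω | T ω = 1}))).toReal := by
      have hsplit : μ (dcell D G T 1 1 1 ∩ {ω | Y1 ω ≤ y})
          = μ ({ω | Y1 ω ≤ y} ∩ ({ω | G ω = 1} ∩ V ⁻¹' Ici (v 1 0) ∩ {ω | T ω = 1}))
            + μ ({ω | Y1 ω ≤ y} ∩ ({ω | G ω = 1}
                ∩ (V ⁻¹' Ici (v 1 1) \ V ⁻¹' Ici (v 1 0)) ∩ {ω | T ω = 1})) := by
        rw [← measure_union hdisj hmeasB]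
        congr 1
        rw [hdceq1 1 1]
        ext ω
        simp only [mem_inter_iff, mem_union, mem_preimage, mem_Ici, mem_diff, mem_setOf_eq]
        constructor
        · rintro ⟨⟨⟨hg, ha⟩, ht⟩, hle⟩
          by_cases hb : v 1 0 ≤ V ω
          · exact Or.inl ⟨hle, ⟨hg, hb⟩, ht⟩
          · exact Or.inr ⟨hle, ⟨hg, ha, hb⟩, ht⟩
        · rintro (⟨hle, ⟨hg, hb⟩, ht⟩ | ⟨hle, ⟨hg, ha, hb⟩, ht⟩)
          · exact ⟨⟨⟨hg, le_trans hab.le hb⟩, ht⟩, hle⟩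
          · exact ⟨⟨⟨hg, ha⟩, ht⟩, hle⟩
      rw [hsplit, ENNReal.toReal_add (measure_ne_top _ _) (measure_ne_top _ _)]
    have hPdiff : ((μ[|cell G T 1 1]) {ω | D ω = 1}).toReal
        - ((μ[|cell G T 1 0]) {ω | D ω = 1}).toReal
        = ((μ[|{ω | G ω = 1}]) (V ⁻¹' Ici (v 1 1) \ V ⁻¹' Ici (v 1 0))).toReal := by
      rw [hP1 1 1 (Or.inr rfl) (Or.inr rfl), hP1 1 0 (Or.inr rfl) (Or.inl rfl)]
      linarith [hkaddR]
    have hRHSv : ccdf μ ({ω | Dpot V G v 0 ω < Dpot V G v 1 ω ∧ G ω = 1}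
          ∩ {ω | T ω = 1}) Y1 y
        = (μ ({ω | Y1 ω ≤ y} ∩ ({ω | G ω = 1}
            ∩ (V ⁻¹' Ici (v 1 1) \ V ⁻¹' Ici (v 1 0)) ∩ {ω | T ω = 1}))).toReal
          / ((μ[|{ω | G ω = 1}]) (V ⁻¹' Ici (v 1 1) \ V ⁻¹' Ici (v 1 0))).toReal
          / (μ ({ω | G ω = 1} ∩ {ω | T ω = 1})).toReal := by
      rw [hSset, aux_ccdf_eq ((hG1m.inter hgapm).inter hT1m), Set.inter_comm, hSTR, div_div]
    rw [hP11F, htrans, hPdiff, hRHSv, hsplitR]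
    rw [div_sub_div_same, add_sub_cancel_left, div_div, div_div, mul_comm]
  -- ===================== d = 0 =====================
  have hmain0 : ∀ y : ℝ,
      (((μ[|cell G T 1 1]) {ω | D ω = 0}).toReal * ccdf μ (dcell D G T 0 1 1) Y y
        - ((μ[|cell G T 1 0]) {ω | D ω = 0}).toReal
          * ccdf μ (dcell D G T 0 1 0)
              (fun ω => quantile (ccdf μ (dcell D G T 0 0 1) Y)
                (ccdf μ (dcell D G T 0 0 0) Y (Y ω))) y)
        / (((μ[|cell G T 1 1]) {ω | D ω = 0}).toReal
            - ((μ[|cell G T 1 0]) {ω | D ω = 0}).toReal)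
      = ccdf μ ({ω | Dpot V G v 0 ω < Dpot V G v 1 ω ∧ G ω = 1}
          ∩ {ω | T ω = 1}) Y0 y := by
    intro y
    have hY0d : ∀ ω, D ω = 0 → Y ω = Y0 ω := by
      intro ω hD
      rw [hYobs ω, hD]; ring
    have htrans := aux_main μ Y D G T V Y0 U0 0 hYm hTm hVm hU0m hG1m hG0m
      (fun u => h₀ u 0) (fun u => h₀ u 1) (hmono 0 (Or.inl rfl)).1 (hmono 1 (Or.inr rfl)).1
      (fun ω ht => by rw [hY0rep ω, ht]) (fun ω ht => by rw [hY0rep ω, ht]) hY0d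
      ((Ici (v 1 0))ᶜ) ((Ici (v 0 0))ᶜ) ((Ici (v 0 1))ᶜ)
      (hIcim _).compl (hIcim _).compl (hIcim _).compl
      (hdceq0 1 0) (hdceq0 0 0) (hdceq0 0 1) hae0
      (by rw [← hDpotC0]; exact (hUindep 0 0).1)
      (by rw [← hDpotW0]; exact (hUindep 1 0).1)
      (hindep 1) SY hSYinterval hSYm
      (hdpos 0 1 0 (Or.inl rfl) (Or.inr rfl) (Or.inl rfl))
      (hdpos 0 0 0 (Or.inl rfl) (Or.inl rfl) (Or.inl rfl))
      (hdpos 0 0 1 (Or.inl rfl) (Or.inl rfl) (Or.inr rfl))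
      hm1pos
      (hsupp 0 1 0 (Or.inl rfl) (Or.inr rfl) (Or.inl rfl))
      (hsupp 0 0 1 (Or.inl rfl) (Or.inl rfl) (Or.inr rfl))
      (hcdfreg 0 1 0 (Or.inl rfl) (Or.inr rfl) (Or.inl rfl)).1
      (hcdfreg 0 0 0 (Or.inl rfl) (Or.inl rfl) (Or.inl rfl)).2
      (hcdfreg 0 0 1 (Or.inl rfl) (Or.inl rfl) (Or.inr rfl)).2
      (hP0 1 0 (Or.inr rfl) (Or.inl rfl)) y
    have hcd011 : cell G T 1 1 ∩ {ω | D ω = 0} = dcell D G T 0 1 1 := by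
      ext ω
      simp only [cell, dcell, mem_inter_iff, mem_setOf_eq]
      tauto
    have hdcm011 : MeasurableSet (dcell D G T 0 1 1) := by
      rw [hdceq0 1 1]
      exact (hG1m.inter (hVm (hIcim _).compl)).inter hT1m
    have hd011R : (μ (dcell D G T 0 1 1)).toReal ≠ 0 :=
      ENNReal.toReal_ne_zero.mpr
        ⟨hdpos 0 1 1 (Or.inl rfl) (Or.inr rfl) (Or.inr rfl), measure_ne_top _ _⟩
    have hYset011 : dcell D G T 0 1 1 ∩ {ω | Y ω ≤ y}
        = dcell D G T 0 1 1 ∩ {ω | Y0 ω ≤ y} := by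
      ext ω
      simp only [dcell, mem_inter_iff, mem_setOf_eq]
      constructor
      · rintro ⟨⟨hD, hg, ht⟩, hle⟩
        exact ⟨⟨hD, hg, ht⟩, by rw [← hY0d ω hD]; exact hle⟩
      · rintro ⟨⟨hD, hg, ht⟩, hle⟩
        exact ⟨⟨hD, hg, ht⟩, by rw [hY0d ω hD]; exact hle⟩
    have hP11F : ((μ[|cell G T 1 1]) {ω | D ω = 0}).toReal * ccdf μ (dcell D G T 0 1 1) Y y
        = (μ (dcell D G T 0 1 1 ∩ {ω | Y0 ω ≤ y})).toReal
          / (μ ({ω | G ω = 1} ∩ {ω | T ω = 1})).toReal := by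
      rw [aux_cond_toReal (hcellm 1 1), aux_ccdf_eq hdcm011, hcd011, hYset011, hcelleq 1 1]
      field_simp
    have hdisj : Disjoint (dcell D G T 0 1 1 ∩ {ω | Y0 ω ≤ y})
        ({ω | Y0 ω ≤ y} ∩ ({ω | G ω = 1}
          ∩ (V ⁻¹' Ici (v 1 1) \ V ⁻¹' Ici (v 1 0)) ∩ {ω | T ω = 1})) := by
      rw [Set.disjoint_left, hdceq0 1 1]
      rintro ω ⟨⟨⟨_, hna⟩, _⟩, _⟩ ⟨_, ⟨_, ha, _⟩, _⟩
      exact hna ha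
    have hmeasB : MeasurableSet ({ω | Y0 ω ≤ y} ∩ ({ω | G ω = 1}
        ∩ (V ⁻¹' Ici (v 1 1) \ V ⁻¹' Ici (v 1 0)) ∩ {ω | T ω = 1})) :=
      (hY0m measurableSet_Iic).inter ((hG1m.inter hgapm).inter hT1m)
    have hsplitR : (μ ({ω | Y0 ω ≤ y} ∩ ({ω | G ω = 1}
          ∩ V ⁻¹' ((Ici (v 1 0))ᶜ) ∩ {ω | T ω = 1}))).toReal
        = (μ (dcell D G T 0 1 1 ∩ {ω | Y0 ω ≤ y})).toReal
          + (μ ({ω | Y0 ω ≤ y} ∩ ({ω | G ω = 1}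
              ∩ (V ⁻¹' Ici (v 1 1) \ V ⁻¹' Ici (v 1 0)) ∩ {ω | T ω = 1}))).toReal := by
      have hsplit : μ ({ω | Y0 ω ≤ y} ∩ ({ω | G ω = 1}
            ∩ V ⁻¹' ((Ici (v 1 0))ᶜ) ∩ {ω | T ω = 1}))
          = μ (dcell D G T 0 1 1 ∩ {ω | Y0 ω ≤ y})
            + μ ({ω | Y0 ω ≤ y} ∩ ({ω | G ω = 1}
                ∩ (V ⁻¹' Ici (v 1 1) \ V ⁻¹' Ici (v 1 0)) ∩ {ω | T ω = 1})) := by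
        rw [← measure_union hdisj hmeasB]
        congr 1
        rw [hdceq0 1 1]
        ext ω
        simp only [mem_inter_iff, mem_union, mem_preimage, mem_compl_iff, mem_Ici,
          mem_diff, mem_setOf_eq]
        constructor
        · rintro ⟨hle, ⟨hg, hnb⟩, ht⟩
          by_cases ha : v 1 1 ≤ V ω
          · exact Or.inr ⟨hle, ⟨hg, ha, hnb⟩, ht⟩
          · exact Or.inl ⟨⟨⟨hg, ha⟩, ht⟩, hle⟩
        · rintro (⟨⟨⟨hg, hna⟩, ht⟩, hle⟩ | ⟨hle, ⟨hg, ha, hnb⟩, ht⟩)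
          · exact ⟨hle, ⟨hg, fun hb => hna (le_trans hab.le hb)⟩, ht⟩
          · exact ⟨hle, ⟨hg, hnb⟩, ht⟩
      rw [hsplit, ENNReal.toReal_add (measure_ne_top _ _) (measure_ne_top _ _)]
    have hkaddR0 : ((μ[|{ω | G ω = 1}]) (V ⁻¹' ((Ici (v 1 0))ᶜ))).toReal
        = ((μ[|{ω | G ω = 1}]) (V ⁻¹' ((Ici (v 1 1))ᶜ))).toReal
          + ((μ[|{ω | G ω = 1}]) (V ⁻¹' Ici (v 1 1) \ V ⁻¹' Ici (v 1 0))).toReal := by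
      have hu : V ⁻¹' ((Ici (v 1 0))ᶜ)
          = V ⁻¹' ((Ici (v 1 1))ᶜ) ∪ (V ⁻¹' Ici (v 1 1) \ V ⁻¹' Ici (v 1 0)) := by
        ext ω
        simp only [mem_preimage, mem_compl_iff, mem_Ici, mem_union, mem_diff]
        constructor
        · intro hnb
          by_cases ha : v 1 1 ≤ V ω
          · exact Or.inr ⟨ha, hnb⟩
          · exact Or.inl ha
        · rintro (hna | ⟨_, hnb⟩)
          · exact fun hb => hna (le_trans hab.le hb)
          · exact hnb
      have hdisj2 : Disjoint (V ⁻¹' ((Ici (v 1 1))ᶜ) : Set Ω)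
          (V ⁻¹' Ici (v 1 1) \ V ⁻¹' Ici (v 1 0)) := by
        rw [Set.disjoint_left]
        rintro ω hna ⟨ha, _⟩
        exact hna ha
      rw [hu, measure_union hdisj2 hgapm,
        ENNReal.toReal_add (measure_ne_top _ _) (measure_ne_top _ _)]
    have hPdiff : ((μ[|cell G T 1 1]) {ω | D ω = 0}).toReal
        - ((μ[|cell G T 1 0]) {ω | D ω = 0}).toReal
        = -(((μ[|{ω | G ω = 1}]) (V ⁻¹' Ici (v 1 1) \ V ⁻¹' Ici (v 1 0))).toReal) := by
      rw [hP0 1 1 (Or.inr rfl) (Or.inr rfl), hP0 1 0 (Or.inr rfl) (Or.inl rfl)]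
      linarith [hkaddR0]
    have hRHSv : ccdf μ ({ω | Dpot V G v 0 ω < Dpot V G v 1 ω ∧ G ω = 1}
          ∩ {ω | T ω = 1}) Y0 y
        = (μ ({ω | Y0 ω ≤ y} ∩ ({ω | G ω = 1}
            ∩ (V ⁻¹' Ici (v 1 1) \ V ⁻¹' Ici (v 1 0)) ∩ {ω | T ω = 1}))).toReal
          / ((μ[|{ω | G ω = 1}]) (V ⁻¹' Ici (v 1 1) \ V ⁻¹' Ici (v 1 0))).toReal
          / (μ ({ω | G ω = 1} ∩ {ω | T ω = 1})).toReal := by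
      rw [hSset, aux_ccdf_eq ((hG1m.inter hgapm).inter hT1m), Set.inter_comm, hSTR, div_div]
    rw [hP11F, htrans, hPdiff, hRHSv, hsplitR]
    rw [div_sub_div_same, sub_add_cancel_left, neg_div, neg_div_neg_eq,
      div_div, div_div, mul_comm]
  -- ===================== conclusion =====================
  intro q hq
  have e1 := funext hmain1
  have e0 := funext hmain0
  rw [e1, e0]
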